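/- Let C(τ) = Σ_{s=1}^{3} [1 + Ψ_s(1 − e^{−λ_s τ})](τ/2 + T_s) + μE/τ with Ψ_s, T_s ≥ 0, λ_s > 0, μ > 0, E > 0. If τ > 0 satisfies 1 − λ_s τ/2 − λ_s T_s ≥ 0 for all s ∈ {1,2,3}, then C''(τ) > 0. -/

import Mathlib

/-!
Each stage term `(1 + ψ (1 - e^{-a t})) (t/2 + T)` has second derivative
`ψ a e^{-a t} (1 - a t/2 - a T)`, which the hypothesis makes nonnegative, while the energy
penalty `μE/t` contributes `2μE/t³ > 0`.
-/

open Real Filter Topology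

lemma deriv_deriv_eq_of_eventually_hasDerivAt {f f' : ℝ → ℝ} {x f'' : ℝ}
    (hf : ∀ᶠ t in 𝓝 x, HasDerivAt f (f' t) t) (hf' : HasDerivAt f' f'' x) :
    deriv (deriv f) x = f'' := by
  have hderiv : deriv f =ᶠ[𝓝 x] f' := hf.mono fun _ ht => ht.deriv
  rw [hderiv.deriv_eq, hf'.deriv]

lemma hasDerivAt_exp_neg_mul (a t : ℝ) :
    HasDerivAt (fun t => exp (-(a * t))) (-(a * exp (-(a * t)))) t := by
  simpa [mul_comm] using ((hasDerivAt_id t).const_mul a).neg.exp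

lemma hasDerivAt_const_div (c : ℝ) {t : ℝ} (ht : t ≠ 0) :
    HasDerivAt (fun t => c / t) (-(c / t ^ 2)) t := by
  simpa [div_eq_mul_inv] using (hasDerivAt_inv ht).const_mul c

lemma hasDerivAt_const_div_sq (c : ℝ) {t : ℝ} (ht : t ≠ 0) :
    HasDerivAt (fun t => c / t ^ 2) (-(2 * c / t ^ 3)) t := by
  refine ((hasDerivAt_const t c).div (hasDerivAt_pow 2 t) (pow_ne_zero 2 ht)).congr_deriv ?_
  field_simp
  ring

lemma hasDerivAt_stageCost (ψ a T t : ℝ) :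
    HasDerivAt (fun t => (1 + ψ * (1 - exp (-(a * t)))) * (t / 2 + T))
      (ψ * a * exp (-(a * t)) * (t / 2 + T) + (1 + ψ * (1 - exp (-(a * t)))) / 2) t := by
  have hu := (((hasDerivAt_exp_neg_mul a t).const_sub 1).const_mul ψ).const_add 1
  have hv := ((hasDerivAt_id' t).div_const 2).add_const T
  exact (hu.fun_mul hv).congr_deriv (by ring)

lemma hasDerivAt_stageCost_deriv (ψ a T t : ℝ) :
    HasDerivAt
      (fun t => ψ * a * exp (-(a * t)) * (t / 2 + T) + (1 + ψ * (1 - exp (-(a * t)))) / 2)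
      (ψ * a * exp (-(a * t)) * (1 - a * t / 2 - a * T)) t := by
  have he := hasDerivAt_exp_neg_mul a t
  have hu := (he.const_mul (ψ * a)).fun_mul (((hasDerivAt_id' t).div_const 2).add_const T)
  have hw := ((he.const_sub 1).const_mul ψ).const_add 1 |>.div_const 2
  exact (hu.fun_add hw).congr_deriv (by ring)

lemma deriv_deriv_samplingCost {ι : Type*} [Fintype ι] (Ψ T lam : ι → ℝ) (c : ℝ) {τ : ℝ}
    (hτ : τ ≠ 0) :
    deriv (deriv fun t => (∑ s, (1 + Ψ s * (1 - exp (-(lam s * t)))) * (t / 2 + T s)) + c / t) τ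
      = (∑ s, Ψ s * lam s * exp (-(lam s * τ)) * (1 - lam s * τ / 2 - lam s * T s))
        + 2 * c / τ ^ 3 := by
  refine deriv_deriv_eq_of_eventually_hasDerivAt (f' := fun t =>
      (∑ s, (Ψ s * lam s * exp (-(lam s * t)) * (t / 2 + T s)
        + (1 + Ψ s * (1 - exp (-(lam s * t)))) / 2)) + -(c / t ^ 2)) ?_ ?_
  · filter_upwards [isOpen_ne.mem_nhds hτ] with t ht
    exact (HasDerivAt.fun_sum fun s _ => hasDerivAt_stageCost (Ψ s) (lam s) (T s) t).add
      (hasDerivAt_const_div c ht)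
  · exact ((HasDerivAt.fun_sum fun s _ => hasDerivAt_stageCost_deriv (Ψ s) (lam s) (T s) τ).add
      (hasDerivAt_const_div_sq c hτ).neg).congr_deriv (by ring)

theorem stmt6_general (Ψ T lam : Fin 3 → ℝ) (μ E : ℝ)
    (hΨ : ∀ s, 0 ≤ Ψ s) (hlam : ∀ s, 0 < lam s)
    (hμ : 0 < μ) (hE : 0 < E) (τ : ℝ) (hτ : 0 < τ)
    (hconv : ∀ s, 0 ≤ 1 - lam s * τ / 2 - lam s * T s) :
    0 < deriv (deriv (fun t : ℝ =>
        (∑ s, (1 + Ψ s * (1 - Real.exp (-(lam s * t)))) * (t / 2 + T s)) + μ * E / t)) τ := by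
  rw [deriv_deriv_samplingCost Ψ T lam (μ * E) hτ.ne']
  have hstages : 0 ≤ ∑ s, Ψ s * lam s * exp (-(lam s * τ)) * (1 - lam s * τ / 2 - lam s * T s) :=
    Finset.sum_nonneg fun s _ => by
      have := hΨ s; have := (hlam s).le; have := hconv s
      positivity
  have hpenalty : 0 < 2 * (μ * E) / τ ^ 3 := by positivity
  linarith

/-- For C(τ) = Σ_{s=1}^{3} [1 + Ψ_s(1 − e^{−λ_s τ})](τ/2 + T_s) + μE/τ,
if τ > 0 satisfies 1 − λ_s τ/2 − λ_s T_s ≥ 0 for all s, then C''(τ) > 0. -/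
theorem stmt6 (Ψ T lam : Fin 3 → ℝ) (μ E : ℝ)
    (hΨ : ∀ s, 0 ≤ Ψ s) (hT : ∀ s, 0 ≤ T s) (hlam : ∀ s, 0 < lam s)
    (hμ : 0 < μ) (hE : 0 < E) (τ : ℝ) (hτ : 0 < τ)
    (hconv : ∀ s, 0 ≤ 1 - lam s * τ / 2 - lam s * T s) :
    0 < deriv (deriv (fun t : ℝ =>
        (∑ s, (1 + Ψ s * (1 - Real.exp (-(lam s * t)))) * (t / 2 + T s)) + μ * E / t)) τ :=
  stmt6_general Ψ T lam μ E hΨ hlam hμ hE τ hτ hconv
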